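/- arXiv:1801.01525 — 3 statements merged into one kernel-verified Lean document; each statement's English description precedes it below -/
import Mathlib

section
/- Let m, G : ℝ → ℝ with m nonnegative integrable, G integrable, both continuous at 0, and m(0) > 0. Then (∫_ℝ G(x) exp(−|x|/λ) dx) / (∫_ℝ m(x) exp(−|x|/λ) dx) → G(0)/m(0) as λ → 0⁺. -/
open MeasureTheory Filter Topology Real

lemma aux_integral_exp_neg_abs : ∫ x : ℝ, Real.exp (-|x|) = 2 := by
  rw [show (fun x : ℝ => Real.exp (-|x|)) = (fun x : ℝ => (fun y => Real.exp (-y)) |x|) from rfl,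
    integral_comp_abs (f := fun y => Real.exp (-y)), integral_exp_neg_Ioi_zero, mul_one]

lemma aux_peak (f : ℝ → ℝ) (hf : Integrable f) (hc : ContinuousAt f 0) :
    Tendsto (fun lam : ℝ => (∫ x, f x * Real.exp (-|x| / lam)) * (2 * lam)⁻¹)
      (𝓝[>] (0:ℝ)) (𝓝 (f 0)) := by
  set φ : ℝ → ℝ := fun x => Real.exp (-|x|) / 2 with hφdef
  have hφ : ∀ x, 0 ≤ φ x := fun x => by positivity
  have h'φ : ∫ x, φ x = 1 := by
    simp only [hφdef, div_eq_mul_inv]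
    rw [integral_mul_const, aux_integral_exp_neg_abs]
    norm_num
  have hdecay : Tendsto (fun x : ℝ => ‖x‖ ^ (Module.finrank ℝ ℝ) * φ x)
      (Bornology.cobounded ℝ) (𝓝 0) := by
    have h1 : Tendsto (fun y : ℝ => y ^ 1 * Real.exp (-y) / 2) atTop (𝓝 (0/2)) :=
      (tendsto_pow_mul_exp_neg_atTop_nhds_zero 1).div_const 2
    have h2 := h1.comp (tendsto_norm_cobounded_atTop (E := ℝ))
    simp only [zero_div] at h2
    refine h2.congr fun x => ?_
    simp [φ, Module.finrank_self, mul_div_assoc]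
  have key := tendsto_integral_comp_smul_smul_of_integrable
    (μ := (volume : Measure ℝ)) hφ h'φ hdecay hf hc
  have hinv : Tendsto (fun lam : ℝ => lam⁻¹) (𝓝[>] (0:ℝ)) atTop := tendsto_inv_nhdsGT_zero
  have := key.comp hinv
  refine this.congr' ?_
  filter_upwards [self_mem_nhdsWithin] with lam (hlam : 0 < lam)
  have hlam' : lam ≠ 0 := hlam.ne'
  simp only [Function.comp, Module.finrank_self, pow_one, smul_eq_mul]
  rw [← integral_mul_const]
  refine integral_congr_ae (Filter.Eventually.of_forall fun x => ?_)
  have habs : |lam⁻¹ * x| = |x| / lam := by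
    rw [abs_mul, abs_inv, abs_of_pos hlam, inv_mul_eq_div]
  simp only [φ, habs, neg_div]
  field_simp

theorem relaxed_expectation_convergence
    (m G : ℝ → ℝ) (hm_nonneg : ∀ x, 0 ≤ m x) (hm_int : Integrable m)
    (hG_int : Integrable G) (hm_cont : ContinuousAt m 0) (hG_cont : ContinuousAt G 0)
    (hm_pos : 0 < m 0) :
    Tendsto
      (fun lam : ℝ =>
        (∫ x, G x * Real.exp (-|x| / lam)) / (∫ x, m x * Real.exp (-|x| / lam)))
      (𝓝[>] (0:ℝ)) (𝓝 (G 0 / m 0)) := by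
  have hG := aux_peak G hG_int hG_cont
  have hm := aux_peak m hm_int hm_cont
  have hdiv := hG.div hm hm_pos.ne'
  refine hdiv.congr' ?_
  filter_upwards [self_mem_nhdsWithin] with lam (hlam : 0 < lam)
  simp only [Pi.div_apply]
  rw [mul_div_mul_right _ _ (by positivity : ((2:ℝ) * lam)⁻¹ ≠ 0)]
end

section
/- Let (Θ, μ), f, g, D, d be as in Lemma 1, and additionally assume d(θ) > 0 for μ-almost every θ ∈ Θ∖D. Then E_λ[g] → E_D[g] as λ → 0⁺, where E_λ[g] = (∫_Θ g f e^{−d/λ} dμ)/(∫_Θ f e^{−d/λ} dμ) and E_D[g] = (∫_D g f dμ)/(∫_D f dμ). -/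
open MeasureTheory Filter Topology Real

lemma aux_tendsto_relax
    {Θ : Type*} [MeasurableSpace Θ] (μ : Measure Θ)
    (F B : Θ → ℝ) (hB : Integrable B μ)
    (hF_meas : AEStronglyMeasurable F μ)
    (hFB : ∀ θ, |F θ| ≤ B θ)
    (D : Set Θ) (hD : MeasurableSet D)
    (d : Θ → ℝ) (hd_meas : Measurable d) (hd_nonneg : ∀ θ, 0 ≤ d θ)
    (hd_zero : ∀ θ ∈ D, d θ = 0)
    (hd_pos : ∀ᵐ θ ∂(μ.restrict Dᶜ), 0 < d θ) :
    Tendsto (fun lam : ℝ => ∫ θ, F θ * Real.exp (-d θ / lam) ∂μ)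
      (𝓝[>] (0:ℝ)) (𝓝 (∫ θ in D, F θ ∂μ)) := by
  have hD' : ∀ᵐ θ ∂μ, θ ∈ Dᶜ → 0 < d θ := (ae_restrict_iff' hD.compl).mp hd_pos
  rw [← integral_indicator hD]
  apply tendsto_integral_filter_of_dominated_convergence B
  · filter_upwards [self_mem_nhdsWithin] with lam _
    exact hF_meas.mul
      ((Real.measurable_exp.comp ((hd_meas.neg).div_const lam)).aestronglyMeasurable)
  · filter_upwards [self_mem_nhdsWithin] with lam (hlam : 0 < lam)
    refine Filter.Eventually.of_forall fun θ => ?_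
    have h1 : Real.exp (-d θ / lam) ≤ 1 := by
      rw [Real.exp_le_one_iff]
      exact div_nonpos_of_nonpos_of_nonneg (neg_nonpos.mpr (hd_nonneg θ)) hlam.le
    have h0 : 0 ≤ Real.exp (-d θ / lam) := (Real.exp_pos _).le
    calc ‖F θ * Real.exp (-d θ / lam)‖ = |F θ| * Real.exp (-d θ / lam) := by
          rw [norm_mul, Real.norm_eq_abs, Real.norm_eq_abs, abs_of_nonneg h0]
      _ ≤ |F θ| * 1 := by
          exact mul_le_mul_of_nonneg_left h1 (abs_nonneg _)
      _ ≤ B θ := by rw [mul_one]; exact hFB θ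
  · exact hB
  · filter_upwards [hD'] with θ hθ
    by_cases hθD : θ ∈ D
    · have : (fun lam : ℝ => F θ * Real.exp (-d θ / lam)) = fun _ => F θ := by
        funext lam; rw [hd_zero θ hθD]; simp
      rw [this, Set.indicator_of_mem hθD]
      exact tendsto_const_nhds
    · rw [Set.indicator_of_notMem hθD]
      have hdθ : 0 < d θ := hθ hθD
      have h1 : Tendsto (fun lam : ℝ => d θ / lam) (𝓝[>] 0) atTop := by
        simpa [div_eq_mul_inv] using
          (tendsto_inv_nhdsGT_zero.const_mul_atTop hdθ)
      have h2 : Tendsto (fun lam : ℝ => -d θ / lam) (𝓝[>] 0) atBot := by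
        exact (tendsto_neg_atTop_atBot.comp h1).congr fun lam => (neg_div _ _).symm
      have h3 : Tendsto (fun lam : ℝ => Real.exp (-d θ / lam)) (𝓝[>] 0) (𝓝 0) :=
        Real.tendsto_exp_atBot.comp h2
      simpa using tendsto_const_nhds.mul h3

theorem relaxed_expectation_tendsto_constrained
    {Θ : Type*} [MeasurableSpace Θ] (μ : Measure Θ)
    (f : Θ → ℝ) (hf_nonneg : ∀ θ, 0 ≤ f θ) (hf_int : Integrable f μ)
    (g : Θ → ℝ)
    (hg_int : Integrable (fun θ => g θ * f θ) μ)
    (hgabs_int : Integrable (fun θ => |g θ| * f θ) μ)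
    (D : Set Θ) (hD : MeasurableSet D)
    (hCD : 0 < ∫ θ in D, f θ ∂μ)
    (d : Θ → ℝ) (hd_meas : Measurable d) (hd_nonneg : ∀ θ, 0 ≤ d θ)
    (hd_zero : ∀ θ ∈ D, d θ = 0)
    (hd_pos : ∀ᵐ θ ∂(μ.restrict Dᶜ), 0 < d θ) :
    Tendsto
      (fun lam : ℝ =>
        (∫ θ, g θ * f θ * Real.exp (-d θ / lam) ∂μ)
          / (∫ θ, f θ * Real.exp (-d θ / lam) ∂μ))
      (𝓝[>] (0:ℝ))
      (𝓝 ((∫ θ in D, g θ * f θ ∂μ) / (∫ θ in D, f θ ∂μ))) := by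
  have hnum := aux_tendsto_relax μ (fun θ => g θ * f θ) (fun θ => |g θ| * f θ)
    hgabs_int hg_int.aestronglyMeasurable
    (fun θ => by rw [abs_mul, abs_of_nonneg (hf_nonneg θ)])
    D hD d hd_meas hd_nonneg hd_zero hd_pos
  have hden := aux_tendsto_relax μ f f hf_int hf_int.aestronglyMeasurable
    (fun θ => le_of_eq (abs_of_nonneg (hf_nonneg θ)))
    D hD d hd_meas hd_nonneg hd_zero hd_pos
  exact hnum.div hden (ne_of_gt hCD)
end

section
/- Let f : ℝ^r → [0,∞) be integrable and d : ℝ^r → [0,∞) measurable. Suppose there exists M > 0 such that for all λ ∈ (0,1), ∫_{\{0 < d ≤ −λ log λ\}} f dμ ≤ M·(−λ log λ). Then ∫_{\{d>0\}} f e^{−2d/λ} dμ = O(λ) as λ → 0⁺. -/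
open MeasureTheory Filter Topology Real Asymptotics

theorem shell_split_bigO
    (r : ℕ) (f : (Fin r → ℝ) → ℝ) (hf_nonneg : ∀ x, 0 ≤ f x) (hf_int : Integrable f)
    (d : (Fin r → ℝ) → ℝ) (hd_meas : Measurable d) (hd_nonneg : ∀ x, 0 ≤ d x)
    (M : ℝ) (hM : 0 < M)
    (hshell : ∀ lam : ℝ, 0 < lam → lam < 1 →
      ∫ x in {x | 0 < d x ∧ d x ≤ -lam * Real.log lam}, f x ≤ M * (-lam * Real.log lam)) :
    (fun lam : ℝ => ∫ x in {x | 0 < d x}, f x * Real.exp (-2 * d x / lam))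
      =O[𝓝[>] (0:ℝ)] (fun lam : ℝ => lam) := by
  have hC0 : 0 ≤ ∫ x, f x := integral_nonneg hf_nonneg
  set C : ℝ := ∫ x, f x with hC
  set M' : ℝ := 2 * M + Real.exp 1 * C with hM'def
  have hM' : 0 < M' := by positivity
  have hfae : 0 ≤ᵐ[(volume : Measure (Fin r → ℝ))] f := ae_of_all _ hf_nonneg
  -- Step A : linear mass bound for all s > 0
  have hA : ∀ s : ℝ, 0 < s → ∫ x in {x | 0 < d x ∧ d x ≤ s}, f x ≤ M' * s := by
    intro s hs
    rcases le_or_gt s (Real.exp (-1)) with hse | hse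
    · -- small s : use hshell with mu = s / (-log s)
      have hL1 : 1 ≤ -Real.log s := by
        have := Real.log_le_log hs hse
        rw [Real.log_exp] at this; linarith
      set L : ℝ := -Real.log s with hL
      have hLpos : 0 < L := by linarith
      set mu : ℝ := s / L with hmu
      have hmupos : 0 < mu := div_pos hs hLpos
      have hmule : mu ≤ s := by
        rw [hmu]; exact div_le_self hs.le hL1
      have hmu1 : mu < 1 := lt_of_le_of_lt hmule (lt_of_le_of_lt hse (by
        have := Real.exp_lt_one_iff.2 (by norm_num : (-1:ℝ) < 0); linarith))
      have hlogmu : Real.log mu = -L - Real.log L := by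
        rw [hmu, Real.log_div (ne_of_gt hs) (ne_of_gt hLpos), hL]; ring_nf
      have hval : -mu * Real.log mu = s * (1 + Real.log L / L) := by
        rw [hlogmu, hmu]; field_simp; ring
      have hlogL0 : 0 ≤ Real.log L := Real.log_nonneg hL1
      have hlogLle : Real.log L ≤ L := (Real.log_le_sub_one_of_pos hLpos).trans (by linarith)
      have h1 : s ≤ -mu * Real.log mu := by
        rw [hval]
        nlinarith [div_nonneg hlogL0 hLpos.le]
      have h2 : -mu * Real.log mu ≤ 2 * s := by
        rw [hval]
        have : Real.log L / L ≤ 1 := (div_le_one hLpos).2 hlogLle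
        nlinarith
      have hmono : ∫ x in {x | 0 < d x ∧ d x ≤ s}, f x
          ≤ ∫ x in {x | 0 < d x ∧ d x ≤ -mu * Real.log mu}, f x := by
        apply setIntegral_mono_set hf_int.integrableOn (ae_restrict_of_ae hfae)
        exact HasSubset.Subset.eventuallyLE (fun x hx => ⟨hx.1, hx.2.trans h1⟩)
      calc ∫ x in {x | 0 < d x ∧ d x ≤ s}, f x
          ≤ ∫ x in {x | 0 < d x ∧ d x ≤ -mu * Real.log mu}, f x := hmono
        _ ≤ M * (-mu * Real.log mu) := hshell mu hmupos hmu1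
        _ ≤ M * (2 * s) := by nlinarith
        _ ≤ M' * s := by rw [hM'def]; nlinarith [mul_nonneg (Real.exp_nonneg 1) hC0]
    · -- large s : total mass bound
      have h1 : ∫ x in {x | 0 < d x ∧ d x ≤ s}, f x ≤ C := by
        rw [hC]; exact setIntegral_le_integral hf_int hfae
      have hes : 1 ≤ Real.exp 1 * s := by
        have h2 : Real.exp (-1) * Real.exp 1 = 1 := by
          rw [← Real.exp_add]; norm_num
        nlinarith [Real.exp_pos (1:ℝ)]
      have : C ≤ Real.exp 1 * C * s := by nlinarith
      rw [hM'def]; nlinarith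
  -- geometric series constant
  have hr0 : (0:ℝ) ≤ Real.exp (-2) := (Real.exp_pos _).le
  have hr1 : Real.exp (-2) < 1 := Real.exp_lt_one_iff.2 (by norm_num)
  have hsum : Summable (fun k : ℕ => ((k:ℝ)+1) * Real.exp (-2) ^ k) := by
    have h1 : Summable (fun k : ℕ => (k:ℝ) ^ 1 * Real.exp (-2) ^ k) :=
      summable_pow_mul_geometric_of_norm_lt_one 1 (by rwa [Real.norm_eq_abs, abs_of_nonneg hr0])
    have h2 : Summable (fun k : ℕ => Real.exp (-2) ^ k) :=
      summable_geometric_of_lt_one hr0 hr1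
    exact (h1.add h2).congr (fun k => by ring)
  set K : ℝ := ∑' k : ℕ, ((k:ℝ)+1) * Real.exp (-2) ^ k with hK
  have hK0 : 0 ≤ K := tsum_nonneg (fun k => by positivity)
  have hset : MeasurableSet {x : Fin r → ℝ | 0 < d x} := measurableSet_lt measurable_const hd_meas
  -- key estimate for each lam in (0,1)
  have key : ∀ lam : ℝ, 0 < lam → lam < 1 →
      ∫ x in {x | 0 < d x}, f x * Real.exp (-2 * d x / lam) ≤ M' * K * lam := by
    intro lam hl0 hl1
    set Sk : ℕ → Set (Fin r → ℝ) :=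
      fun k => {x | 0 < d x ∧ (k:ℝ) * lam ≤ d x ∧ d x < ((k:ℝ)+1) * lam} with hSk
    have mSk : ∀ k, MeasurableSet (Sk k) := by
      intro k
      exact (measurableSet_lt measurable_const hd_meas).inter
        ((measurableSet_le measurable_const hd_meas).inter
          (measurableSet_lt hd_meas measurable_const))
    have hSksub : ∀ k, Sk k ⊆ {x | 0 < d x} := fun k x hx => hx.1
    set g : (Fin r → ℝ) → ℝ := fun x => f x * Real.exp (-2 * d x / lam) with hg
    have hg_nonneg : ∀ x, 0 ≤ g x := fun x => mul_nonneg (hf_nonneg x) (Real.exp_nonneg _)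
    have hexp_meas : Measurable fun x => Real.exp (-2 * d x / lam) :=
      Real.measurable_exp.comp ((hd_meas.const_mul (-2)).div_const lam)
    have hg_aesm : AEStronglyMeasurable g (volume.restrict {x | 0 < d x}) :=
      (hf_int.aestronglyMeasurable.mul hexp_meas.aestronglyMeasurable).restrict
    -- the ENNReal integral
    set F : ℕ → (Fin r → ℝ) → ENNReal :=
      fun k => (Sk k).indicator (fun x => ENNReal.ofReal (Real.exp (-2 * k) * f x)) with hF
    have hpt : ∀ x ∈ {x | 0 < d x},
        ENNReal.ofReal (g x) ≤ ∑' k, F k x := by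
      intro x hx
      have hdx : 0 < d x := hx
      set k : ℕ := ⌊d x / lam⌋₊ with hk
      have hk1 : (k:ℝ) * lam ≤ d x := by
        have := Nat.floor_le (le_of_lt (div_pos hdx hl0))
        calc (k:ℝ) * lam ≤ (d x / lam) * lam := by
              exact mul_le_mul_of_nonneg_right this hl0.le
          _ = d x := by field_simp
      have hk2 : d x < ((k:ℝ)+1) * lam := by
        have := Nat.lt_floor_add_one (d x / lam)
        calc d x = (d x / lam) * lam := by field_simp
          _ < ((k:ℝ)+1) * lam := by
              exact mul_lt_mul_of_pos_right this hl0
      have hmem : x ∈ Sk k := ⟨hdx, hk1, hk2⟩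
      have hle : g x ≤ Real.exp (-2 * k) * f x := by
        have h1 : -2 * d x / lam ≤ -2 * k := by
          rw [div_le_iff₀ hl0]
          nlinarith
        calc g x = f x * Real.exp (-2 * d x / lam) := rfl
          _ ≤ f x * Real.exp (-2 * k) :=
              mul_le_mul_of_nonneg_left (Real.exp_le_exp.2 h1) (hf_nonneg x)
          _ = Real.exp (-2 * k) * f x := mul_comm _ _
      calc ENNReal.ofReal (g x) ≤ ENNReal.ofReal (Real.exp (-2 * k) * f x) :=
            ENNReal.ofReal_le_ofReal hle
        _ = F k x := by rw [hF]; simp only [Set.indicator_of_mem hmem]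
        _ ≤ ∑' j, F j x := ENNReal.le_tsum k
    have hFmeas : ∀ k, AEMeasurable (F k) (volume.restrict {x | 0 < d x}) := by
      intro k
      exact ((ENNReal.measurable_ofReal.comp_aemeasurable
        (hf_int.aemeasurable.const_mul _)).indicator (mSk k)).restrict
    have hterm : ∀ k : ℕ, ∫⁻ x in {x | 0 < d x}, F k x
        ≤ ENNReal.ofReal (Real.exp (-2) ^ k * (M' * (((k:ℝ)+1) * lam))) := by
      intro k
      have e1 : ∫⁻ x in {x | 0 < d x}, F k x
          = ∫⁻ x in Sk k, ENNReal.ofReal (Real.exp (-2 * k) * f x) := by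
        simp only [hF]
        rw [lintegral_indicator (mSk k), Measure.restrict_restrict (mSk k),
          Set.inter_eq_self_of_subset_left (hSksub k)]
      have e2 : ∫⁻ x in Sk k, ENNReal.ofReal (Real.exp (-2 * k) * f x)
          = ENNReal.ofReal (Real.exp (-2 * k)) * ∫⁻ x in Sk k, ENNReal.ofReal (f x) := by
        simp_rw [ENNReal.ofReal_mul (Real.exp_nonneg _)]
        exact lintegral_const_mul' _ _ ENNReal.ofReal_ne_top
      have e3 : ∫⁻ x in Sk k, ENNReal.ofReal (f x)
          = ENNReal.ofReal (∫ x in Sk k, f x) :=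
        (ofReal_integral_eq_lintegral_ofReal hf_int.integrableOn
          (ae_restrict_of_ae hfae)).symm
      have e4 : ∫ x in Sk k, f x ≤ M' * (((k:ℝ)+1) * lam) := by
        have hsub : Sk k ⊆ {x | 0 < d x ∧ d x ≤ ((k:ℝ)+1) * lam} :=
          fun x hx => ⟨hx.1, hx.2.2.le⟩
        calc ∫ x in Sk k, f x
            ≤ ∫ x in {x | 0 < d x ∧ d x ≤ ((k:ℝ)+1) * lam}, f x :=
              setIntegral_mono_set hf_int.integrableOn (ae_restrict_of_ae hfae)
                (HasSubset.Subset.eventuallyLE hsub)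
          _ ≤ M' * (((k:ℝ)+1) * lam) := hA _ (by positivity)
      have e5 : Real.exp (-2 * k) = Real.exp (-2) ^ k := by
        rw [← Real.exp_nat_mul]; ring_nf
      rw [e1, e2, e3, e5, ← ENNReal.ofReal_mul (by positivity)]
      exact ENNReal.ofReal_le_ofReal
        (mul_le_mul_of_nonneg_left e4 (by positivity))
    have hsum2 : Summable (fun k : ℕ => Real.exp (-2) ^ k * (M' * (((k:ℝ)+1) * lam))) := by
      exact (hsum.mul_left (M' * lam)).congr (fun k => by ring)
    have htsum_val : ∑' k : ℕ, Real.exp (-2) ^ k * (M' * (((k:ℝ)+1) * lam))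
        = M' * K * lam := by
      have : ∀ k : ℕ, Real.exp (-2) ^ k * (M' * (((k:ℝ)+1) * lam))
          = (M' * lam) * (((k:ℝ)+1) * Real.exp (-2) ^ k) := fun k => by ring
      rw [tsum_congr this, tsum_mul_left, hK]; ring
    have hlin : ∫⁻ x in {x | 0 < d x}, ENNReal.ofReal (g x)
        ≤ ENNReal.ofReal (M' * K * lam) := by
      calc ∫⁻ x in {x | 0 < d x}, ENNReal.ofReal (g x)
          ≤ ∫⁻ x in {x | 0 < d x}, ∑' k, F k x :=
            lintegral_mono_ae ((ae_restrict_iff' hset).2 (ae_of_all _ hpt))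
        _ = ∑' k, ∫⁻ x in {x | 0 < d x}, F k x := lintegral_tsum hFmeas
        _ ≤ ∑' k : ℕ, ENNReal.ofReal (Real.exp (-2) ^ k * (M' * (((k:ℝ)+1) * lam))) :=
            ENNReal.tsum_le_tsum hterm
        _ = ENNReal.ofReal (∑' k : ℕ, Real.exp (-2) ^ k * (M' * (((k:ℝ)+1) * lam))) :=
            (ENNReal.ofReal_tsum_of_nonneg (fun k => by positivity) hsum2).symm
        _ = ENNReal.ofReal (M' * K * lam) := by rw [htsum_val]
    have heq : ∫ x in {x | 0 < d x}, g x
        = (∫⁻ x in {x | 0 < d x}, ENNReal.ofReal (g x)).toReal :=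
      integral_eq_lintegral_of_nonneg_ae (ae_of_all _ hg_nonneg) hg_aesm
    rw [heq]
    exact ENNReal.toReal_le_of_le_ofReal (by positivity) hlin
  -- conclude Big-O
  rw [isBigO_iff]
  refine ⟨M' * K, ?_⟩
  filter_upwards [Ioo_mem_nhdsGT_of_mem (Set.mem_Ico.2 ⟨le_refl (0:ℝ), one_pos⟩)] with lam hlam
  have h0 : 0 ≤ ∫ x in {x | 0 < d x}, f x * Real.exp (-2 * d x / lam) :=
    setIntegral_nonneg hset (fun x _ => mul_nonneg (hf_nonneg x) (Real.exp_nonneg _))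
  rw [Real.norm_eq_abs, Real.norm_eq_abs, abs_of_nonneg h0, abs_of_pos hlam.1]
  calc ∫ x in {x | 0 < d x}, f x * Real.exp (-2 * d x / lam)
      ≤ M' * K * lam := key lam hlam.1 hlam.2
    _ = M' * K * lam := rfl
end
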